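/- arXiv:2505.10054 — 9 statements merged into one kernel-verified Lean document; each statement's English description precedes it below -/
import Mathlib

section
/- Let β > 0, let d_S ≥ d_r ≥ 1 be integers, and let E : Fin d_S → ℝ be nondecreasing. Let p be a probability distribution on Fin d_S satisfying condition (R3). Then for every unitary complex matrix U indexed by (Fin d_S) × (Fin d_r) that commutes with the diagonal matrix H having diagonal entries H_{(k,j)} = E_k + E_j, the output ground-state population satisfies Σ_{j<d_r} (U·D·U†)_{(0,j),(0,j)} ≤ exp(−β·E_0) / Σ_{k<d_S} exp(−β·E_k), where D is the diagonal matrix with D_{(k,j),(k,j)} = p_k·τ^r_j. (Paper's Theorem 2: no cooling below the bath temperature by a single collision when the molecule is no larger than the system, the molecule carries the truncated system spectrum, and the system state has an effective temperature.) -/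
open scoped BigOperators
open Matrix

/-!
Energy conservation forces every level `(k, l)` that the collision connects with `(0, j)` to
satisfy `E k + E l = E 0 + E j`, hence `E k ≤ E j`, and then (R3) bounds its input weight
`p k e^{-β E l} / Z_r` by `p j e^{-β E 0} / Z_r`. The rows of `U` being unit vectors, the output
population of `(0, j)` is a convex combination of such weights. Summing over `j` leaves
`(∑_{j < d_r} p j) e^{-β E 0} / Z_r`, and (R3) again, through the cross terms
`p j e^{-β E k} ≤ p k e^{-β E j}` for `j < d_r ≤ k`, gives `(∑_{j < d_r} p j) Z_S ≤ Z_r`.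
-/

open Real Finset

namespace Matrix

variable {n : Type*} [Fintype n] [DecidableEq n]

theorem apply_eq_zero_of_mul_diagonal_eq {R : Type*} [CommRing R] [NoZeroDivisors R]
    {U : Matrix n n R} {d : n → R} (h : U * diagonal d = diagonal d * U) {x y : n}
    (hxy : d x ≠ d y) : U x y = 0 := by
  have hxy' := congrFun (congrFun h x) y
  rw [mul_diagonal, diagonal_mul] at hxy'
  have : (d y - d x) * U x y = 0 := by linear_combination hxy'
  exact (mul_eq_zero.mp this).resolve_left (sub_ne_zero.mpr hxy.symm)

theorem re_mul_diagonal_mul_conjTranspose_apply_self (U : Matrix n n ℂ) (q : n → ℝ) (x : n) :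
    ((U * diagonal (fun m => (q m : ℂ)) * Uᴴ) x x).re = ∑ m, q m * Complex.normSq (U x m) := by
  rw [mul_apply, Complex.re_sum]
  simp only [mul_diagonal, conjTranspose_apply]
  refine sum_congr rfl fun m _ => ?_
  rw [mul_right_comm, Complex.star_def, Complex.mul_conj, ← Complex.ofReal_mul,
    Complex.ofReal_re, mul_comm]

theorem sum_normSq_apply_eq_one {U : Matrix n n ℂ} (hU : U ∈ unitaryGroup n ℂ) (x : n) :
    ∑ m, Complex.normSq (U x m) = 1 := by
  have hUU : U * Uᴴ = 1 := mem_unitaryGroup_iff.mp hU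
  simpa [hUU] using (U.re_mul_diagonal_mul_conjTranspose_apply_self (fun _ => 1) x).symm

theorem re_mul_diagonal_mul_conjTranspose_apply_self_le {U : Matrix n n ℂ}
    (hU : U ∈ unitaryGroup n ℂ) {q : n → ℝ} {x : n} {c : ℝ} (hq : ∀ m, U x m ≠ 0 → q m ≤ c) :
    ((U * diagonal (fun m => (q m : ℂ)) * Uᴴ) x x).re ≤ c := by
  rw [re_mul_diagonal_mul_conjTranspose_apply_self]
  calc ∑ m, q m * Complex.normSq (U x m) ≤ ∑ m, c * Complex.normSq (U x m) := by
        refine sum_le_sum fun m _ => ?_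
        by_cases h : U x m = 0
        · simp [h]
        · exact mul_le_mul_of_nonneg_right (hq m h) (Complex.normSq_nonneg _)
    _ = c := by rw [← mul_sum, sum_normSq_apply_eq_one hU, mul_one]

end Matrix

section Gibbs

variable {ι : Type*} (β : ℝ) {E p : ι → ℝ}

theorem mul_exp_le_of_add_eq
    (hR3 : ∀ k k', E k ≤ E k' → p k * exp (β * E k) ≤ p k' * exp (β * E k'))
    {k l k' l' : ι} (hk : E k ≤ E k') (hE : E k + E l = E k' + E l') :
    p k * exp (-β * E l) ≤ p k' * exp (-β * E l') := by
  have split : ∀ a b, p a * exp (-β * E b) = p a * exp (β * E a) * exp (-β * (E a + E b)) := by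
    intro a b
    rw [mul_assoc, ← exp_add]
    ring_nf
  rw [split k, split k', hE]
  exact mul_le_mul_of_nonneg_right (hR3 k k' hk) (exp_pos _).le

theorem sum_mul_sum_exp_le_sum_exp [Fintype ι]
    (hR3 : ∀ k k', E k ≤ E k' → p k * exp (β * E k) ≤ p k' * exp (β * E k'))
    (hp : ∑ k, p k = 1) {s : Finset ι} (hs : ∀ j ∈ s, ∀ k ∉ s, E j ≤ E k) :
    (∑ k ∈ s, p k) * ∑ k, exp (-β * E k) ≤ ∑ k ∈ s, exp (-β * E k) := by
  classical
  have cross : (∑ j ∈ s, p j) * ∑ k ∈ sᶜ, exp (-β * E k)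
      ≤ (∑ j ∈ s, exp (-β * E j)) * ∑ k ∈ sᶜ, p k := by
    rw [sum_mul_sum, sum_mul_sum]
    refine sum_le_sum fun j hj => sum_le_sum fun k hk => ?_
    rw [mul_comm (exp _)]
    exact mul_exp_le_of_add_eq β hR3 (hs j hj k (mem_compl.mp hk)) (add_comm _ _)
  rw [← sum_add_sum_compl s p] at hp
  rw [← sum_add_sum_compl s]
  linear_combination cross + (∑ j ∈ s, exp (-β * E j)) * hp

end Gibbs

theorem Fin.le_of_mem_map_castLEEmb_of_notMem {m n : ℕ} (h : m ≤ n) {j k : Fin n}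
    (hj : j ∈ univ.map (Fin.castLEEmb h)) (hk : k ∉ univ.map (Fin.castLEEmb h)) : j ≤ k := by
  simp only [mem_map, mem_univ, true_and, Fin.castLEEmb_apply] at hj hk
  obtain ⟨i, rfl⟩ := hj
  by_contra! hlt
  exact hk ⟨⟨k, (Fin.lt_def.mp hlt).trans i.isLt⟩, rfl⟩

theorem no_cooling_single_collision_general
    (β : ℝ) (dS dr : ℕ) (hdS : 0 < dS) (hd : dr ≤ dS)
    (E : Fin dS → ℝ) (hE : Monotone E)
    (p : Fin dS → ℝ) (hp1 : ∑ k, p k = 1)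
    (hR3 : ∀ k k' : Fin dS, E k ≤ E k' →
      p k * Real.exp (β * E k) ≤ p k' * Real.exp (β * E k'))
    (U : Matrix (Fin dS × Fin dr) (Fin dS × Fin dr) ℂ)
    (hU : U ∈ Matrix.unitaryGroup (Fin dS × Fin dr) ℂ)
    (hcomm : U * Matrix.diagonal
        (fun kj : Fin dS × Fin dr => ((E kj.1 + E (Fin.castLE hd kj.2) : ℝ) : ℂ))
      = Matrix.diagonal
        (fun kj : Fin dS × Fin dr => ((E kj.1 + E (Fin.castLE hd kj.2) : ℝ) : ℂ)) * U) :
    ∑ j : Fin dr,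
      ((U * Matrix.diagonal (fun kj : Fin dS × Fin dr =>
          ((p kj.1 * (Real.exp (-β * E (Fin.castLE hd kj.2)) /
            (∑ i : Fin dr, Real.exp (-β * E (Fin.castLE hd i)))) : ℝ) : ℂ)) * Uᴴ)
        (⟨0, hdS⟩, j) (⟨0, hdS⟩, j)).re
    ≤ Real.exp (-β * E ⟨0, hdS⟩) / (∑ k : Fin dS, Real.exp (-β * E k)) := by
  set ground : Fin dS := ⟨0, hdS⟩
  set Zr := ∑ i : Fin dr, exp (-β * E (Fin.castLE hd i))
  set s := univ.map (Fin.castLEEmb hd)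
  have hZr : Zr = ∑ k ∈ s, exp (-β * E k) := by rw [sum_map]; rfl
  have hs : ∀ j ∈ s, ∀ k ∉ s, E j ≤ E k := fun j hj k hk =>
    hE (Fin.le_of_mem_map_castLEEmb_of_notMem hd hj hk)
  have hpop : ∀ j, ((U * diagonal (fun kj : Fin dS × Fin dr =>
      ((p kj.1 * (exp (-β * E (Fin.castLE hd kj.2)) / Zr) : ℝ) : ℂ)) * Uᴴ)
        (ground, j) (ground, j)).re ≤ p (Fin.castLE hd j) * exp (-β * E ground) / Zr := by
    intro j
    refine re_mul_diagonal_mul_conjTranspose_apply_self_le hU fun m hm => ?_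
    have hcons : E ground + E (Fin.castLE hd j) = E m.1 + E (Fin.castLE hd m.2) := by
      by_contra h
      exact hm (apply_eq_zero_of_mul_diagonal_eq hcomm (by exact_mod_cast h))
    have hle : E m.1 ≤ E (Fin.castLE hd j) := by
      have : E ground ≤ E (Fin.castLE hd m.2) := hE (Fin.le_def.mpr (Nat.zero_le _))
      linarith
    rw [← mul_div_assoc]
    exact div_le_div_of_nonneg_right (mul_exp_le_of_add_eq β hR3 hle (by linarith))
      (sum_nonneg fun _ _ => (exp_pos _).le)
  calc _ ≤ ∑ j, p (Fin.castLE hd j) * exp (-β * E ground) / Zr := sum_le_sum fun j _ => hpop j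
    _ = (∑ k ∈ s, p k) * exp (-β * E ground) / Zr := by rw [← sum_div, ← sum_mul, sum_map]; rfl
    _ ≤ exp (-β * E ground) / ∑ k, exp (-β * E k) := by
      have hZ : 0 < ∑ k, exp (-β * E k) := sum_pos (fun _ _ => exp_pos _) ⟨ground, mem_univ _⟩
      refine div_le_of_le_mul₀ (sum_nonneg fun _ _ => (exp_pos _).le) (by positivity) ?_
      rw [div_mul_eq_mul_div, le_div_iff₀ hZ, hZr]
      nlinarith [sum_mul_sum_exp_le_sum_exp β hR3 hp1 hs, exp_pos (-β * E ground)]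

/-- Paper's Theorem 2 (no-go): if the molecule is no larger than the system (R1),
the molecule carries the truncated system spectrum (R2), and the system state has an
effective temperature (R3), then no energy-preserving collision can push the system's
ground-state population above the bath Gibbs value. -/
theorem no_cooling_single_collision
    (β : ℝ) (hβ : 0 < β) (dS dr : ℕ) (hdS : 0 < dS) (hdr : 0 < dr) (hd : dr ≤ dS)
    (E : Fin dS → ℝ) (hE : Monotone E)
    (p : Fin dS → ℝ) (hp0 : ∀ k, 0 ≤ p k) (hp1 : ∑ k, p k = 1)
    (hR3 : ∀ k k' : Fin dS, E k ≤ E k' →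
      p k * Real.exp (β * E k) ≤ p k' * Real.exp (β * E k'))
    (U : Matrix (Fin dS × Fin dr) (Fin dS × Fin dr) ℂ)
    (hU : U ∈ Matrix.unitaryGroup (Fin dS × Fin dr) ℂ)
    (hcomm : U * Matrix.diagonal
        (fun kj : Fin dS × Fin dr => ((E kj.1 + E (Fin.castLE hd kj.2) : ℝ) : ℂ))
      = Matrix.diagonal
        (fun kj : Fin dS × Fin dr => ((E kj.1 + E (Fin.castLE hd kj.2) : ℝ) : ℂ)) * U) :
    ∑ j : Fin dr,
      ((U * Matrix.diagonal (fun kj : Fin dS × Fin dr =>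
          ((p kj.1 * (Real.exp (-β * E (Fin.castLE hd kj.2)) /
            (∑ i : Fin dr, Real.exp (-β * E (Fin.castLE hd i)))) : ℝ) : ℂ)) * Uᴴ)
        (⟨0, hdS⟩, j) (⟨0, hdS⟩, j)).re
    ≤ Real.exp (-β * E ⟨0, hdS⟩) / (∑ k : Fin dS, Real.exp (-β * E k)) :=
  no_cooling_single_collision_general β dS dr hdS hd E hE p hp1 hR3 U hU hcomm
end

section
/- Let β > 0, let d_S ≥ d_r ≥ 1 be integers, let E : Fin d_S → ℝ be nondecreasing, and let p be a probability distribution on Fin d_S satisfying condition (R3). Then for every j < d_r and every k' < d_S, j' < d_r with E_{k'} + E_{j'} = E_0 + E_j, one has p_{k'}·exp(−β·E_{j'}) ≤ p_j·exp(−β·E_0). Equivalently, p_{k'}·τ^r_{j'} ≤ p_j·τ^r_0, i.e. within each joint energy eigenspace containing a state of the form |0,j⟩, the largest joint population p_{k'}·τ^r_{j'} is the one at (j,0). (Key lemma in the proof of the paper's Theorem 2.) -/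
open Real

theorem mul_exp_neg_le_of_mul_exp_le {β a b x y u v : ℝ}
    (h : a * exp (β * x) ≤ b * exp (β * y)) (hsum : x + u = v + y) :
    a * exp (-β * u) ≤ b * exp (-β * v) := calc
  a * exp (-β * u) = a * exp (β * x) * exp (-β * (v + y)) := by
    rw [mul_assoc, ← exp_add, ← hsum]; ring_nf
  _ ≤ b * exp (β * y) * exp (-β * (v + y)) := by gcongr
  _ = b * exp (-β * v) := by rw [mul_assoc, ← exp_add]; ring_nf

theorem largest_population_in_subspace_general
    (β : ℝ) (dS dr : ℕ) (hdS : 0 < dS) (hd : dr ≤ dS)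
    (E : Fin dS → ℝ) (hE : Monotone E)
    (p : Fin dS → ℝ)
    (hR3 : ∀ k k' : Fin dS, E k ≤ E k' →
      p k * Real.exp (β * E k) ≤ p k' * Real.exp (β * E k'))
    (j : Fin dr) (k' : Fin dS) (j' : Fin dr)
    (hsub : E k' + E (Fin.castLE hd j') = E ⟨0, hdS⟩ + E (Fin.castLE hd j)) :
    p k' * Real.exp (-β * E (Fin.castLE hd j'))
      ≤ p (Fin.castLE hd j) * Real.exp (-β * E ⟨0, hdS⟩) := by
  have hground : E ⟨0, hdS⟩ ≤ E (Fin.castLE hd j') := hE (Nat.zero_le _)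
  have hk' : E k' ≤ E (Fin.castLE hd j) := by linarith
  exact mul_exp_neg_le_of_mul_exp_le (hR3 _ _ hk') hsub

/-- Key lemma in the proof of the paper's Theorem 2: within each joint energy eigenspace
containing a state of the form |0,j⟩, the largest joint population p_{k'}·τ^r_{j'} is the
one at (j,0), i.e. p_{k'}·exp(−β·E_{j'}) ≤ p_j·exp(−β·E_0). -/
theorem largest_population_in_subspace
    (β : ℝ) (hβ : 0 < β) (dS dr : ℕ) (hdS : 0 < dS) (hdr : 0 < dr) (hd : dr ≤ dS)
    (E : Fin dS → ℝ) (hE : Monotone E)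
    (p : Fin dS → ℝ) (hp0 : ∀ k, 0 ≤ p k) (hp1 : ∑ k, p k = 1)
    (hR3 : ∀ k k' : Fin dS, E k ≤ E k' →
      p k * Real.exp (β * E k) ≤ p k' * Real.exp (β * E k'))
    (j : Fin dr) (k' : Fin dS) (j' : Fin dr)
    (hsub : E k' + E (Fin.castLE hd j') = E ⟨0, hdS⟩ + E (Fin.castLE hd j)) :
    p k' * Real.exp (-β * E (Fin.castLE hd j'))
      ≤ p (Fin.castLE hd j) * Real.exp (-β * E ⟨0, hdS⟩) :=
  largest_population_in_subspace_general β dS dr hdS hd E hE p hR3 j k' j' hsub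
end

section
/- Let β > 0, let d_S ≥ d_r ≥ 1 be integers, let E : Fin d_S → ℝ be nondecreasing, and let p be a probability distribution on Fin d_S satisfying condition (R3). Then (Σ_{j<d_r} p_j) / (Σ_{j<d_r} exp(−β·E_j)) ≤ 1 / (Σ_{k<d_S} exp(−β·E_k)); equivalently, Σ_{j<d_r} p_j·τ^r_0 ≤ exp(−β·E_0)/Σ_{k<d_S} exp(−β·E_k), where τ^r_0 = exp(−β·E_0)/Σ_{i<d_r} exp(−β·E_i). (Final mediant-type inequality in the proof of the paper's Theorem 2.) -/
/-! With weights `w k = exp (-β E k)`, (R3) says that `p / w` is monotone along the energy, so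
every truncated level `j < d_r` and every discarded level `k ≥ d_r` satisfy
`p j * w k ≤ p k * w j`. Summing over all such pairs compares the cross products of the
truncated and discarded parts, `A * C ≤ (1 - A) * B` with `A = Σ_{j<d_r} p j`,
`B = Σ_{j<d_r} w j`, `C = Σ_{k≥d_r} w k`, which rearranges to `A / B ≤ 1 / (B + C)`. -/

open Finset

theorem sum_mul_sum_le_sum_mul_sum_of_cross_le {ι R : Type*} [CommSemiring R] [PartialOrder R]
    [IsOrderedAddMonoid R] (s t : Finset ι) (p w : ι → R)
    (h : ∀ j ∈ s, ∀ k ∈ t, p j * w k ≤ p k * w j) :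
    (∑ j ∈ s, p j) * ∑ k ∈ t, w k ≤ (∑ k ∈ t, p k) * ∑ j ∈ s, w j := by
  rw [sum_mul_sum, sum_mul_sum, sum_comm]
  exact sum_le_sum fun k hk => sum_le_sum fun j hj => h j hj k hk

theorem mul_exp_neg_le_mul_exp_neg_of_mul_exp_le {β a b x y : ℝ}
    (h : a * Real.exp (β * x) ≤ b * Real.exp (β * y)) :
    a * Real.exp (-β * y) ≤ b * Real.exp (-β * x) := by
  simp only [neg_mul, Real.exp_neg, ← div_eq_mul_inv]
  rwa [div_le_div_iff₀ (Real.exp_pos _) (Real.exp_pos _)]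

theorem div_le_one_div_add_of_mul_le_one_sub_mul {a b c : ℝ} (hb : 0 ≤ b) (hc : 0 ≤ c)
    (h : a * c ≤ (1 - a) * b) : a / b ≤ 1 / (b + c) := by
  rcases hb.eq_or_lt with rfl | hb
  · simpa using hc
  rw [div_le_div_iff₀ hb (by positivity)]
  linarith

theorem mediant_inequality_R3_general
    (β : ℝ) (dS dr : ℕ) (hd : dr ≤ dS)
    (E : Fin dS → ℝ) (hE : Monotone E)
    (p : Fin dS → ℝ) (hp1 : ∑ k, p k = 1)
    (hR3 : ∀ k k' : Fin dS, E k ≤ E k' →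
      p k * Real.exp (β * E k) ≤ p k' * Real.exp (β * E k')) :
    (∑ j : Fin dr, p (Fin.castLE hd j)) /
        (∑ j : Fin dr, Real.exp (-β * E (Fin.castLE hd j)))
      ≤ 1 / (∑ k : Fin dS, Real.exp (-β * E k)) := by
  set s := univ.map (Fin.castLEEmb hd)
  have hsum (f : Fin dS → ℝ) : ∑ j : Fin dr, f (Fin.castLE hd j) = ∑ k ∈ s, f k :=
    (sum_map univ (Fin.castLEEmb hd) f).symm
  have hcross : ∀ j ∈ s, ∀ k ∈ sᶜ,
      p j * Real.exp (-β * E k) ≤ p k * Real.exp (-β * E j) := by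
    intro j hj k hk
    obtain ⟨i, -, rfl⟩ := mem_map.mp hj
    have hik : Fin.castLE hd i ≤ k := by
      by_contra! hki
      exact mem_compl.mp hk
        (mem_map.mpr ⟨⟨k, (Fin.lt_def.mp hki).trans i.isLt⟩, mem_univ _, rfl⟩)
    exact mul_exp_neg_le_mul_exp_neg_of_mul_exp_le (hR3 _ _ (hE hik))
  rw [hsum p, hsum fun k => Real.exp (-β * E k), ← sum_add_sum_compl s]
  refine div_le_one_div_add_of_mul_le_one_sub_mul (by positivity) (by positivity) ?_
  rw [← hp1, ← sum_add_sum_compl s p, add_sub_cancel_left]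
  exact sum_mul_sum_le_sum_mul_sum_of_cross_le s sᶜ p _ hcross

/-- Final mediant-type inequality in the proof of the paper's Theorem 2:
(Σ_{j<d_r} p_j)/(Σ_{j<d_r} e^{−βE_j}) ≤ 1/(Σ_{k<d_S} e^{−βE_k}) for a distribution p
satisfying (R3). -/
theorem mediant_inequality_R3
    (β : ℝ) (hβ : 0 < β) (dS dr : ℕ) (hdS : 0 < dS) (hdr : 0 < dr) (hd : dr ≤ dS)
    (E : Fin dS → ℝ) (hE : Monotone E)
    (p : Fin dS → ℝ) (hp0 : ∀ k, 0 ≤ p k) (hp1 : ∑ k, p k = 1)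
    (hR3 : ∀ k k' : Fin dS, E k ≤ E k' →
      p k * Real.exp (β * E k) ≤ p k' * Real.exp (β * E k')) :
    (∑ j : Fin dr, p (Fin.castLE hd j)) /
        (∑ j : Fin dr, Real.exp (-β * E (Fin.castLE hd j)))
      ≤ 1 / (∑ k : Fin dS, Real.exp (-β * E k)) :=
  mediant_inequality_R3_general β dS dr hd E hE p hp1 hR3
end

section
/- Let β > 0, let μ ≥ ν ≥ 1 and d ≥ 1 be integers, and let ε : Fin d → ℝ satisfy ε_0 = 0 and ε_l ≥ 0 for all l. For configurations K : Fin μ → Fin d write E(K) = Σ_{η<μ} ε(K_η), and similarly E(J) for J : Fin ν → Fin d. Let p be a probability distribution on the system configurations (Fin μ → Fin d) satisfying the energy-ordered condition (R3): p_K·exp(β·E(K)) ≤ p_{K'}·exp(β·E(K')) whenever E(K) ≤ E(K'). Let τ_J = exp(−β·E(J))/Z^ν with Z = Σ_{l<d} exp(−β·ε_l) be the molecule Gibbs distribution. Then for every unitary complex matrix U indexed by (Fin μ → Fin d) × (Fin ν → Fin d) that commutes with the diagonal matrix with entries E(K) + E(J), the output population of the all-ground system configuration O satisfies Σ_J (U·D·U†)_{(O,J),(O,J)}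 ≤ 1/Z^μ, where D is diagonal with D_{(K,J),(K,J)} = p_K·τ_J. (Paper's Theorem 3: no sub-bath cooling when the system is μ copies and the molecule is ν ≤ μ copies of the same particle.) -/
/-!
An energy-preserving unitary only mixes states within an energy shell, so the `(O, J)` diagonal
entry of `U D Uᴴ` is a convex combination of the weights `p K * τ J'` with
`E K + E J' = E J`. By (R3) each of them is at most `p (J, 0) / Z ^ ν`, where `(J, 0)` puts `J`
on the first `ν` particles of the system and the remaining `μ - ν` in the ground level. Applying
(R3) once more, `p (J, 0) * exp (-β E L) ≤ p (J, L)`; summing over `J` and `L` gives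
`∑ J, p (J, 0) * Z ^ (μ - ν) ≤ 1`.
-/

open Matrix

namespace Matrix

variable {n : Type*} [Fintype n] [DecidableEq n]

theorem sum_normSq_apply_of_mem_unitaryGroup {U : Matrix n n ℂ} (hU : U ∈ unitaryGroup n ℂ)
    (i : n) : ∑ x, Complex.normSq (U i x) = 1 := by
  have h : (U * star U) i i = 1 := by rw [mem_unitaryGroup_iff.mp hU, one_apply_eq]
  simpa [mul_apply, star_apply, Complex.mul_conj, Complex.re_sum] using congrArg Complex.re h

theorem re_mul_diagonal_mul_conjTranspose_apply (U : Matrix n n ℂ) (D : n → ℝ) (i : n) :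
    ((U * diagonal (fun x => (D x : ℂ)) * Uᴴ) i i).re = ∑ x, D x * Complex.normSq (U i x) := by
  rw [mul_apply, Complex.re_sum]
  refine Finset.sum_congr rfl fun x _ => ?_
  rw [mul_diagonal, conjTranspose_apply, mul_comm (U i x), mul_assoc, ← starRingEnd_apply,
    Complex.mul_conj, ← Complex.ofReal_mul, Complex.ofReal_re]

theorem apply_eq_zero_of_commute_diagonal {U : Matrix n n ℂ} {e : n → ℝ}
    (hcomm : U * diagonal (fun x => (e x : ℂ)) = diagonal (fun x => (e x : ℂ)) * U) {i x : n}
    (hne : e x ≠ e i) : U i x = 0 := by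
  have h := congrFun (congrFun hcomm i) x
  rw [mul_diagonal, diagonal_mul, mul_comm, ← sub_eq_zero, ← sub_mul, mul_eq_zero] at h
  exact h.resolve_left (sub_ne_zero.mpr (by exact_mod_cast hne))

theorem re_mul_diagonal_mul_conjTranspose_apply_le {U : Matrix n n ℂ}
    (hU : U ∈ unitaryGroup n ℂ) {e : n → ℝ}
    (hcomm : U * diagonal (fun x => (e x : ℂ)) = diagonal (fun x => (e x : ℂ)) * U)
    (D : n → ℝ) (i : n) {c : ℝ} (hD : ∀ x, e x = e i → D x ≤ c) :
    ((U * diagonal (fun x => (D x : ℂ)) * Uᴴ) i i).re ≤ c := by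
  calc ((U * diagonal (fun x => (D x : ℂ)) * Uᴴ) i i).re
      = ∑ x, D x * Complex.normSq (U i x) := re_mul_diagonal_mul_conjTranspose_apply U D i
    _ ≤ ∑ x, c * Complex.normSq (U i x) := by
      refine Finset.sum_le_sum fun x _ => ?_
      by_cases he : e x = e i
      · exact mul_le_mul_of_nonneg_right (hD x he) (Complex.normSq_nonneg _)
      · simp [apply_eq_zero_of_commute_diagonal hcomm he]
    _ = c := by rw [← Finset.mul_sum, sum_normSq_apply_of_mem_unitaryGroup hU, mul_one]

end Matrix

section Energy

variable {α ι : Type*} [Fintype ι] (ε : α → ℝ)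

def energy (K : ι → α) : ℝ := ∑ η, ε (K η)

variable {ε}

theorem energy_nonneg (hε : ∀ l, 0 ≤ ε l) (K : ι → α) : 0 ≤ energy ε K :=
  Finset.sum_nonneg fun η _ => hε (K η)

theorem energy_const {a : α} (ha : ε a = 0) : energy ε (fun _ : ι => a) = 0 := by
  simp [energy, ha]

theorem energy_append {m k : ℕ} (J : Fin m → α) (L : Fin k → α) :
    energy ε (Fin.append J L) = energy ε J + energy ε L := by
  simp [energy, Fin.sum_univ_add]

theorem sum_exp_neg_energy [Fintype α] [DecidableEq ι] (β : ℝ) :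
    ∑ L : ι → α, Real.exp (-β * energy ε L) =
      (∑ l, Real.exp (-β * ε l)) ^ Fintype.card ι := by
  rw [← Finset.card_univ, ← Finset.prod_const, Fintype.prod_sum]
  refine Fintype.sum_congr _ _ fun L => ?_
  rw [energy, Finset.mul_sum, Real.exp_sum]

end Energy

section EnergyOrdered

variable {κ : Type*}

/-- Condition (R3): the ratio of `p` to the Gibbs weight `exp (-β E)` is monotone in `E`. -/
def EnergyOrdered (β : ℝ) (E p : κ → ℝ) : Prop :=
  ∀ K K', E K ≤ E K' → p K * Real.exp (β * E K) ≤ p K' * Real.exp (β * E K')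

theorem EnergyOrdered.mul_exp_le {β : ℝ} {E p : κ → ℝ} (h : EnergyOrdered β E p) {K K' : κ}
    {s : ℝ} (hs : 0 ≤ s) (hK : E K' = E K + s) : p K * Real.exp (-β * s) ≤ p K' := by
  calc p K * Real.exp (-β * s) = p K * Real.exp (β * E K) * Real.exp (-(β * E K')) := by
        rw [mul_assoc, ← Real.exp_add, hK]; ring_nf
    _ ≤ p K' * Real.exp (β * E K') * Real.exp (-(β * E K')) :=
        mul_le_mul_of_nonneg_right (h K K' (by linarith)) (Real.exp_pos _).le
    _ = p K' := by rw [mul_assoc, ← Real.exp_add, add_neg_cancel, Real.exp_zero, mul_one]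

end EnergyOrdered

theorem EnergyOrdered.sum_append_const_mul_pow_le {α : Type*} [Fintype α] {β : ℝ}
    {ε : α → ℝ} (hε : ∀ l, 0 ≤ ε l) {a : α} (ha : ε a = 0) {m k : ℕ}
    {p : (Fin (m + k) → α) → ℝ} (hp : EnergyOrdered β (energy ε) p) (hp1 : ∑ K, p K = 1) :
    (∑ J : Fin m → α, p (Fin.append J fun _ => a)) * (∑ l, Real.exp (-β * ε l)) ^ k ≤ 1 := by
  calc (∑ J : Fin m → α, p (Fin.append J fun _ => a)) * (∑ l, Real.exp (-β * ε l)) ^ k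
      = ∑ J : Fin m → α, ∑ L : Fin k → α,
          p (Fin.append J fun _ => a) * Real.exp (-β * energy ε L) := by
        rw [← Finset.sum_mul_sum, sum_exp_neg_energy, Fintype.card_fin]
    _ ≤ ∑ J : Fin m → α, ∑ L : Fin k → α, p (Fin.append J L) :=
        Finset.sum_le_sum fun J _ => Finset.sum_le_sum fun L _ =>
          hp.mul_exp_le (energy_nonneg hε L)
            (by simp only [energy_append, energy_const ha, add_zero])
    _ = 1 := by
        rw [← Fintype.sum_prod_type', ← hp1]
        exact Fintype.sum_equiv (Fin.appendEquiv m k) _ _ fun _ => rfl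

theorem no_cooling_copies_general
    (β : ℝ) (μ ν d : ℕ) (hμν : ν ≤ μ) (hd : 0 < d)
    (ε : Fin d → ℝ) (hε0 : ε ⟨0, hd⟩ = 0) (hεnn : ∀ l, 0 ≤ ε l)
    (p : (Fin μ → Fin d) → ℝ) (hp1 : ∑ K, p K = 1)
    (hR3 : ∀ K K' : Fin μ → Fin d,
      (∑ η, ε (K η)) ≤ (∑ η, ε (K' η)) →
      p K * Real.exp (β * ∑ η, ε (K η)) ≤ p K' * Real.exp (β * ∑ η, ε (K' η)))
    (U : Matrix ((Fin μ → Fin d) × (Fin ν → Fin d))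
          ((Fin μ → Fin d) × (Fin ν → Fin d)) ℂ)
    (hU : U ∈ Matrix.unitaryGroup ((Fin μ → Fin d) × (Fin ν → Fin d)) ℂ)
    (hcomm : U * Matrix.diagonal
        (fun KJ : (Fin μ → Fin d) × (Fin ν → Fin d) =>
          (((∑ η, ε (KJ.1 η)) + ∑ η, ε (KJ.2 η) : ℝ) : ℂ))
      = Matrix.diagonal
        (fun KJ : (Fin μ → Fin d) × (Fin ν → Fin d) =>
          (((∑ η, ε (KJ.1 η)) + ∑ η, ε (KJ.2 η) : ℝ) : ℂ)) * U) :
    ∑ J : Fin ν → Fin d,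
      ((U * Matrix.diagonal
          (fun KJ : (Fin μ → Fin d) × (Fin ν → Fin d) =>
            ((p KJ.1 * (Real.exp (-β * ∑ η, ε (KJ.2 η)) /
              (∑ l : Fin d, Real.exp (-β * ε l)) ^ ν) : ℝ) : ℂ)) * Uᴴ)
        ((fun _ => ⟨0, hd⟩), J) ((fun _ => ⟨0, hd⟩), J)).re
    ≤ 1 / (∑ l : Fin d, Real.exp (-β * ε l)) ^ μ := by
  obtain ⟨k, rfl⟩ := Nat.exists_eq_add_of_le hμν
  set Z := ∑ l : Fin d, Real.exp (-β * ε l)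
  have hZ : 0 < Z := Finset.sum_pos (fun l _ => Real.exp_pos _) ⟨⟨0, hd⟩, Finset.mem_univ _⟩
  have hp : EnergyOrdered β (energy ε) p := hR3
  calc _ ≤ ∑ J : Fin ν → Fin d, p (Fin.append J fun _ => ⟨0, hd⟩) / Z ^ ν :=
        Finset.sum_le_sum fun J _ =>
          re_mul_diagonal_mul_conjTranspose_apply_le hU hcomm _ _ fun x hx => by
            rw [mul_div_assoc']
            refine div_le_div_of_nonneg_right (hp.mul_exp_le (energy_nonneg hεnn x.2) ?_)
              (pow_pos hZ ν).le
            rw [energy_append, energy_const hε0, add_zero]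
            simpa [energy, hε0] using hx.symm
    _ = (∑ J : Fin ν → Fin d, p (Fin.append J fun _ => ⟨0, hd⟩)) * Z ^ k / Z ^ (ν + k) := by
        rw [pow_add, mul_comm (Z ^ ν), ← div_div, mul_div_cancel_right₀ _ (pow_pos hZ k).ne',
          Finset.sum_div]
    _ ≤ 1 / Z ^ (ν + k) :=
        div_le_div_of_nonneg_right (hp.sum_append_const_mul_pow_le hεnn hε0 hp1)
          (pow_pos hZ _).le

/-- Paper's Theorem 3: the system consists of μ copies of a particle and the molecule of
ν ≤ μ copies of the same particle. If the system distribution satisfies the energy-ordered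
condition (R3), no energy-preserving collision can push the population of the all-ground
system configuration above the Gibbs value 1/Z^μ. -/
theorem no_cooling_copies
    (β : ℝ) (hβ : 0 < β) (μ ν d : ℕ) (hν : 1 ≤ ν) (hμν : ν ≤ μ) (hd : 0 < d)
    (ε : Fin d → ℝ) (hε0 : ε ⟨0, hd⟩ = 0) (hεnn : ∀ l, 0 ≤ ε l)
    (p : (Fin μ → Fin d) → ℝ) (hp0 : ∀ K, 0 ≤ p K) (hp1 : ∑ K, p K = 1)
    (hR3 : ∀ K K' : Fin μ → Fin d,
      (∑ η, ε (K η)) ≤ (∑ η, ε (K' η)) →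
      p K * Real.exp (β * ∑ η, ε (K η)) ≤ p K' * Real.exp (β * ∑ η, ε (K' η)))
    (U : Matrix ((Fin μ → Fin d) × (Fin ν → Fin d))
          ((Fin μ → Fin d) × (Fin ν → Fin d)) ℂ)
    (hU : U ∈ Matrix.unitaryGroup ((Fin μ → Fin d) × (Fin ν → Fin d)) ℂ)
    (hcomm : U * Matrix.diagonal
        (fun KJ : (Fin μ → Fin d) × (Fin ν → Fin d) =>
          (((∑ η, ε (KJ.1 η)) + ∑ η, ε (KJ.2 η) : ℝ) : ℂ))
      = Matrix.diagonal
        (fun KJ : (Fin μ → Fin d) × (Fin ν → Fin d) =>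
          (((∑ η, ε (KJ.1 η)) + ∑ η, ε (KJ.2 η) : ℝ) : ℂ)) * U) :
    ∑ J : Fin ν → Fin d,
      ((U * Matrix.diagonal
          (fun KJ : (Fin μ → Fin d) × (Fin ν → Fin d) =>
            ((p KJ.1 * (Real.exp (-β * ∑ η, ε (KJ.2 η)) /
              (∑ l : Fin d, Real.exp (-β * ε l)) ^ ν) : ℝ) : ℂ)) * Uᴴ)
        ((fun _ => ⟨0, hd⟩), J) ((fun _ => ⟨0, hd⟩), J)).re
    ≤ 1 / (∑ l : Fin d, Real.exp (-β * ε l)) ^ μ :=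
  no_cooling_copies_general β μ ν d hμν hd ε hε0 hεnn p hp1 hR3 U hU hcomm
end

section
/- Let β > 0, E > 0 and q = exp(−β·E). Consider a qutrit system with energies (0, E, 2E) initially in the pure excited distribution p = (0, 0, 1), and a qubit molecule with energies (0, 2E) in its Gibbs state τ^r = (1/(1+q²), q²/(1+q²)). Then there exists a unitary complex matrix U indexed by (Fin 3) × (Fin 2), commuting with the diagonal matrix H_{(k,j)} = k·E + 2j·E, such that the output ground-state population satisfies Σ_{j<2} (U·D·U†)_{(0,j),(0,j)} = 1/(1+q²) > 1/(1+q+q²), where D is diagonal with D_{(k,j),(k,j)} = p_k·τ^r_j. (This shows condition (R2) — matching of the lowest spectra — is essential for the paper's Theorem 2: although (R1) and (R3) hold, the system is cooled below the Gibbs ground population 1/(1+q+q²).) -/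
open scoped BigOperators
open Matrix

/-!
The levels `(2, 0)` and `(0, 1)` of the joint system both have energy `2E`, so the permutation
matrix of their transposition is an energy-preserving unitary. Conjugating the diagonal input
state by it just permutes the diagonal, moving the whole excited population `τ^r_0 = 1/(1+q²)`
into the ground level `(0, 1)` of the qutrit; and `1 + q² < 1 + q + q²` since `q > 0`.
-/

theorem Equiv.comp_swap_eq_self {α β : Type*} [DecidableEq α] {f : α → β} {a b : α}
    (h : f a = f b) : f ∘ Equiv.swap a b = f := by
  funext x
  rcases eq_or_ne x a with rfl | hxa
  · simp [h]
  rcases eq_or_ne x b with rfl | hxb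
  · simp [h]
  · simp [Equiv.swap_apply_of_ne_of_ne hxa hxb]

namespace Matrix

variable {n R : Type*} [Fintype n] [DecidableEq n]

theorem permMatrix_mem_unitaryGroup [CommRing R] [StarRing R] (σ : Equiv.Perm n) :
    σ.permMatrix R ∈ unitaryGroup n R := by
  rw [mem_unitaryGroup_iff, star_eq_conjTranspose, conjTranspose_permMatrix, ← permMatrix_mul,
    inv_mul_cancel, permMatrix_one]

theorem permMatrix_mul_diagonal_mul_conjTranspose [Semiring R] [StarRing R] (σ : Equiv.Perm n)
    (d : n → R) : σ.permMatrix R * diagonal d * (σ.permMatrix R)ᴴ = diagonal (d ∘ σ) := by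
  rw [conjTranspose_permMatrix, Equiv.Perm.permMatrix, Equiv.Perm.permMatrix,
    PEquiv.toMatrix_toPEquiv_mul, PEquiv.mul_toMatrix_toPEquiv, Equiv.Perm.inv_def,
    Equiv.symm_symm, submatrix_submatrix, Function.id_comp, Function.comp_id,
    submatrix_diagonal_equiv]

theorem permMatrix_mul_diagonal [Semiring R] (σ : Equiv.Perm n) (d : n → R) :
    σ.permMatrix R * diagonal d = diagonal (d ∘ σ) * σ.permMatrix R := by
  ext i j
  rw [PEquiv.toMatrix_toPEquiv_mul, PEquiv.mul_toMatrix_toPEquiv, submatrix_apply,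
    submatrix_apply, diagonal_apply, diagonal_apply]
  simp only [id, Equiv.eq_symm_apply, Function.comp_apply]

theorem commute_permMatrix_diagonal [Semiring R] {σ : Equiv.Perm n} {d : n → R}
    (hd : d ∘ σ = d) : Commute (σ.permMatrix R) (diagonal d) := by
  rw [Commute, SemiconjBy, permMatrix_mul_diagonal, hd]

end Matrix

theorem R2_essential_counterexample_general
    (β E : ℝ) (q : ℝ) (hq : q = Real.exp (-β * E)) :
    ∃ U : Matrix (Fin 3 × Fin 2) (Fin 3 × Fin 2) ℂ,
      U ∈ Matrix.unitaryGroup (Fin 3 × Fin 2) ℂ ∧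
      U * Matrix.diagonal
          (fun kj : Fin 3 × Fin 2 => (((kj.1 : ℕ) * E + 2 * (kj.2 : ℕ) * E : ℝ) : ℂ))
        = Matrix.diagonal
          (fun kj : Fin 3 × Fin 2 => (((kj.1 : ℕ) * E + 2 * (kj.2 : ℕ) * E : ℝ) : ℂ)) * U ∧
      (∑ j : Fin 2,
        (U * Matrix.diagonal
            (fun kj : Fin 3 × Fin 2 =>
              (((if kj.1 = 2 then (1 : ℝ) else 0) *
                (q ^ (2 * (kj.2 : ℕ)) / (1 + q ^ 2)) : ℝ) : ℂ)) * Uᴴ)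
          ((0 : Fin 3), j) ((0 : Fin 3), j))
        = ((1 / (1 + q ^ 2) : ℝ) : ℂ) ∧
      1 / (1 + q + q ^ 2) < 1 / (1 + q ^ 2) := by
  have hq0 : 0 < q := hq ▸ Real.exp_pos _
  set σ := Equiv.swap ((2 : Fin 3), (0 : Fin 2)) ((0 : Fin 3), (1 : Fin 2))
  refine ⟨σ.permMatrix ℂ, permMatrix_mem_unitaryGroup σ,
    (commute_permMatrix_diagonal (Equiv.comp_swap_eq_self (by norm_num))).eq, ?_,
    one_div_lt_one_div_of_lt (by positivity) (by linarith)⟩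
  have hσ0 : σ ((0 : Fin 3), (0 : Fin 2)) = ((0 : Fin 3), (0 : Fin 2)) := by decide
  have hσ1 : σ ((0 : Fin 3), (1 : Fin 2)) = ((2 : Fin 3), (0 : Fin 2)) :=
    Equiv.swap_apply_right _ _
  rw [permMatrix_mul_diagonal_mul_conjTranspose, Fin.sum_univ_two]
  simp [hσ0, hσ1]

/-- Condition (R2) is essential for the paper's Theorem 2: a qutrit system with energies
(0,E,2E) in the pure excited state, colliding with a qubit molecule with energies (0,2E) in
its Gibbs state, can be cooled to ground population 1/(1+q²), which exceeds the qutrit Gibbs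
ground population 1/(1+q+q²). -/
theorem R2_essential_counterexample
    (β E : ℝ) (hβ : 0 < β) (hE : 0 < E) (q : ℝ) (hq : q = Real.exp (-β * E)) :
    ∃ U : Matrix (Fin 3 × Fin 2) (Fin 3 × Fin 2) ℂ,
      U ∈ Matrix.unitaryGroup (Fin 3 × Fin 2) ℂ ∧
      U * Matrix.diagonal
          (fun kj : Fin 3 × Fin 2 => (((kj.1 : ℕ) * E + 2 * (kj.2 : ℕ) * E : ℝ) : ℂ))
        = Matrix.diagonal
          (fun kj : Fin 3 × Fin 2 => (((kj.1 : ℕ) * E + 2 * (kj.2 : ℕ) * E : ℝ) : ℂ)) * U ∧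
      (∑ j : Fin 2,
        (U * Matrix.diagonal
            (fun kj : Fin 3 × Fin 2 =>
              (((if kj.1 = 2 then (1 : ℝ) else 0) *
                (q ^ (2 * (kj.2 : ℕ)) / (1 + q ^ 2)) : ℝ) : ℂ)) * Uᴴ)
          ((0 : Fin 3), j) ((0 : Fin 3), j))
        = ((1 / (1 + q ^ 2) : ℝ) : ℂ) ∧
      1 / (1 + q + q ^ 2) < 1 / (1 + q ^ 2) :=
  R2_essential_counterexample_general β E q hq
end

section
/- Let β > 0, E > 0, q = exp(−β·E), τ_0 = 1/(1+q), τ_1 = q/(1+q). Let U be a unitary complex matrix indexed by (Fin 2) × (Fin 2) commuting with the diagonal matrix H_{(a,b)} = (a+b)·E and with U_{(0,0),(0,0)} = 1. Write u = U_{(0,1),(0,1)}, w = U_{(1,0),(1,0)}, v = U_{(1,1),(1,1)}. Then for every 2×2 density matrix ρ and every N ≥ 1, the N-fold collision output σ = T_U^N(ρ) satisfies σ_{00} = τ_0 + |u|^{2N}·(ρ_{00} − τ_0) and σ_{01} = (τ_1·u·conj(v) + τ_0·conj(w))^N · ρ_{01}. (Equations (rho00)–(rho01) used in the proof of the paper's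 Theorem 1.) -/
/-!
Commuting with `H` forces `U` to preserve the excitation number `a + b`, so `U` is block diagonal:
`1` on `(0,0)`, a `2 × 2` block `[[u, x], [y, w]]` on `(0,1), (1,0)`, and `v` on `(1,1)`.
Tracing out the molecule then multiplies the coherence `ρ₀₁` by `τ₁ u v̄ + τ₀ w̄`, and sends the
population `ρ₀₀` to `τ₀ ρ₀₀ + τ₁ |u|² ρ₀₀ + τ₀ |x|² ρ₁₁`. Since the channel preserves the trace and
`|x|² = 1 - |u|²` by unitarity, one collision multiplies the deviation `ρ₀₀ - τ₀` by `|u|²`.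
-/

open scoped BigOperators
open Matrix
open scoped ComplexOrder

/-- The qubit collision channel: the system qubit interacts with a molecule qubit in the
Gibbs state diag(1/(1+q), q/(1+q)) via the joint unitary `U`, and the molecule is traced out. -/
noncomputable def collide (q : ℝ) (U : Matrix (Fin 2 × Fin 2) (Fin 2 × Fin 2) ℂ)
    (ρ : Matrix (Fin 2) (Fin 2) ℂ) : Matrix (Fin 2) (Fin 2) ℂ :=
  Matrix.of fun a b => ∑ c : Fin 2,
    (U * (Matrix.kroneckerMap (· * ·) ρ
        (Matrix.diagonal fun j : Fin 2 => ((q ^ (j : ℕ) / (1 + q) : ℝ) : ℂ))) * Uᴴ)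
      (a, c) (b, c)

open ComplexConjugate
open scoped Kronecker

theorem Matrix.apply_eq_zero_of_mul_diagonal_eq_s7 {n R : Type*} [Fintype n] [DecidableEq n]
    [CommRing R] [NoZeroDivisors R] {U : Matrix n n R} {d : n → R}
    (h : U * diagonal d = diagonal d * U) {a b : n} (hab : d a ≠ d b) : U a b = 0 := by
  have h' := congrFun (congrFun h a) b
  rw [mul_diagonal, diagonal_mul] at h'
  have : U a b * (d b - d a) = 0 := by linear_combination h'
  exact (mul_eq_zero.mp this).resolve_right (sub_ne_zero.mpr hab.symm)

theorem Matrix.sum_norm_sq_row_eq_one_of_mem_unitaryGroup {n 𝕜 : Type*} [Fintype n]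
    [DecidableEq n] [RCLike 𝕜] {U : Matrix n n 𝕜} (hU : U ∈ unitaryGroup n 𝕜) (a : n) :
    ∑ b, ‖U a b‖ ^ 2 = 1 := by
  have h := congrFun (congrFun (mem_unitaryGroup_iff.mp hU) a) a
  simp only [mul_apply, star_apply, ← starRingEnd_apply, RCLike.mul_conj, one_apply_eq] at h
  exact_mod_cast h

def IsExcitationPreserving (U : Matrix (Fin 2 × Fin 2) (Fin 2 × Fin 2) ℂ) : Prop :=
  ∀ a b : Fin 2 × Fin 2, (a.1 : ℕ) + a.2 ≠ b.1 + b.2 → U a b = 0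

theorem isExcitationPreserving_of_commute {E : ℝ} (hE : E ≠ 0)
    {U : Matrix (Fin 2 × Fin 2) (Fin 2 × Fin 2) ℂ}
    (hcomm : U * diagonal (fun ab : Fin 2 × Fin 2 => ((((ab.1 : ℕ) + (ab.2 : ℕ)) * E : ℝ) : ℂ))
      = diagonal (fun ab : Fin 2 × Fin 2 => ((((ab.1 : ℕ) + (ab.2 : ℕ)) * E : ℝ) : ℂ)) * U) :
    IsExcitationPreserving U := by
  intro a b hab
  refine apply_eq_zero_of_mul_diagonal_eq_s7 hcomm ?_
  rw [Ne, Complex.ofReal_inj, mul_left_inj' hE]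
  exact_mod_cast hab

noncomputable def gibbsWeight (q : ℝ) (j : Fin 2) : ℝ := q ^ (j : ℕ) / (1 + q)

theorem sum_gibbsWeight {q : ℝ} (hq : 1 + q ≠ 0) : ∑ j, gibbsWeight q j = 1 := by
  simp only [gibbsWeight, Fin.sum_univ_two, Fin.val_zero, Fin.val_one, pow_zero, pow_one]
  field_simp

section Collision

variable {q : ℝ} {U : Matrix (Fin 2 × Fin 2) (Fin 2 × Fin 2) ℂ}

theorem collide_eq (ρ : Matrix (Fin 2) (Fin 2) ℂ) :
    collide q U ρ = of fun a b => ∑ c : Fin 2,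
      (U * (ρ ⊗ₖ diagonal fun j => (gibbsWeight q j : ℂ)) * Uᴴ) (a, c) (b, c) :=
  rfl

theorem trace_collide (hq : 1 + q ≠ 0) (hU : U ∈ unitaryGroup (Fin 2 × Fin 2) ℂ)
    (ρ : Matrix (Fin 2) (Fin 2) ℂ) : (collide q U ρ).trace = ρ.trace := by
  have hUU : Uᴴ * U = 1 := mem_unitaryGroup_iff'.mp hU
  calc (collide q U ρ).trace
      = (U * (ρ ⊗ₖ diagonal fun j => (gibbsWeight q j : ℂ)) * Uᴴ).trace := by
        simp only [trace, diag, collide_eq, of_apply, Fintype.sum_prod_type]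
    _ = ρ.trace * ∑ j, (gibbsWeight q j : ℂ) := by
        rw [trace_mul_cycle, hUU, one_mul, trace_kronecker, trace_diagonal]
    _ = ρ.trace := by rw [← Complex.ofReal_sum, sum_gibbsWeight hq, Complex.ofReal_one, mul_one]

theorem trace_iterate_collide (hq : 1 + q ≠ 0) (hU : U ∈ unitaryGroup (Fin 2 × Fin 2) ℂ)
    (ρ : Matrix (Fin 2) (Fin 2) ℂ) (n : ℕ) : ((collide q U)^[n] ρ).trace = ρ.trace := by
  induction n with
  | zero => rfl
  | succ n ih => rw [Function.iterate_succ_apply', trace_collide hq hU, ih]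

theorem collide_apply_zero_zero (hex : IsExcitationPreserving U) (h00 : U (0, 0) (0, 0) = 1)
    (σ : Matrix (Fin 2) (Fin 2) ℂ) :
    collide q U σ 0 0 = gibbsWeight q 0 * σ 0 0
      + gibbsWeight q 1 * (‖U (0, 1) (0, 1)‖ : ℂ) ^ 2 * σ 0 0
      + gibbsWeight q 0 * (‖U (0, 1) (1, 0)‖ : ℂ) ^ 2 * σ 1 1 := by
  simp only [collide_eq, of_apply, mul_apply, conjTranspose_apply, kroneckerMap_apply,
    diagonal_apply, Fintype.sum_prod_type, Fin.sum_univ_two, h00,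
    hex (0, 0) (0, 1) (by decide), hex (0, 0) (1, 0) (by decide), hex (0, 0) (1, 1) (by decide),
    hex (0, 1) (0, 0) (by decide), hex (0, 1) (1, 1) (by decide), mul_zero, zero_mul, add_zero,
    zero_add, one_ne_zero, zero_ne_one, if_true, if_false, Complex.star_def, map_zero, map_one]
  rw [← Complex.mul_conj', ← Complex.mul_conj']
  ring

theorem collide_apply_zero_one (hex : IsExcitationPreserving U) (h00 : U (0, 0) (0, 0) = 1)
    (σ : Matrix (Fin 2) (Fin 2) ℂ) :
    collide q U σ 0 1 = (gibbsWeight q 1 * U (0, 1) (0, 1) * conj (U (1, 1) (1, 1))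
      + gibbsWeight q 0 * conj (U (1, 0) (1, 0))) * σ 0 1 := by
  simp only [collide_eq, of_apply, mul_apply, conjTranspose_apply, kroneckerMap_apply,
    diagonal_apply, Fintype.sum_prod_type, Fin.sum_univ_two, h00,
    hex (0, 0) (0, 1) (by decide), hex (0, 0) (1, 0) (by decide), hex (0, 0) (1, 1) (by decide),
    hex (1, 0) (0, 0) (by decide), hex (1, 0) (1, 1) (by decide),
    hex (0, 1) (0, 0) (by decide), hex (0, 1) (1, 1) (by decide),
    hex (1, 1) (0, 0) (by decide), hex (1, 1) (0, 1) (by decide), hex (1, 1) (1, 0) (by decide),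
    mul_zero, zero_mul, add_zero, zero_add, one_ne_zero, zero_ne_one, if_true, if_false,
    Complex.star_def, map_zero]
  ring

theorem collide_apply_zero_zero_sub_gibbsWeight (hq : 1 + q ≠ 0)
    (hU : U ∈ unitaryGroup (Fin 2 × Fin 2) ℂ) (hex : IsExcitationPreserving U)
    (h00 : U (0, 0) (0, 0) = 1) {σ : Matrix (Fin 2) (Fin 2) ℂ} (hσ : σ.trace = 1) :
    collide q U σ 0 0 - gibbsWeight q 0
      = (‖U (0, 1) (0, 1)‖ : ℂ) ^ 2 * (σ 0 0 - gibbsWeight q 0) := by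
  have hrow : (‖U (0, 1) (0, 1)‖ : ℂ) ^ 2 + (‖U (0, 1) (1, 0)‖ : ℂ) ^ 2 = 1 := by
    have h := sum_norm_sq_row_eq_one_of_mem_unitaryGroup hU (0, 1)
    simp only [Fintype.sum_prod_type, Fin.sum_univ_two, hex (0, 1) (0, 0) (by decide),
      hex (0, 1) (1, 1) (by decide), norm_zero] at h
    exact_mod_cast (by linarith : ‖U (0, 1) (0, 1)‖ ^ 2 + ‖U (0, 1) (1, 0)‖ ^ 2 = 1)
  have htr : σ 0 0 + σ 1 1 = 1 := by simpa [trace, Fin.sum_univ_two] using hσ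
  have hgibbs : (gibbsWeight q 0 : ℂ) + gibbsWeight q 1 = 1 := by
    exact_mod_cast (Fin.sum_univ_two _).symm.trans (sum_gibbsWeight hq)
  rw [collide_apply_zero_zero hex h00]
  linear_combination gibbsWeight q 0 * σ 1 1 * hrow
    + gibbsWeight q 0 * (1 - (‖U (0, 1) (0, 1)‖ : ℂ) ^ 2) * htr
    + (‖U (0, 1) (0, 1)‖ : ℂ) ^ 2 * σ 0 0 * hgibbs

theorem iterate_collide_apply_zero_zero (hq : 1 + q ≠ 0)
    (hU : U ∈ unitaryGroup (Fin 2 × Fin 2) ℂ) (hex : IsExcitationPreserving U)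
    (h00 : U (0, 0) (0, 0) = 1) {ρ : Matrix (Fin 2) (Fin 2) ℂ} (hρ : ρ.trace = 1) (n : ℕ) :
    ((collide q U)^[n] ρ) 0 0
      = gibbsWeight q 0 + ((‖U (0, 1) (0, 1)‖ : ℂ) ^ 2) ^ n * (ρ 0 0 - gibbsWeight q 0) := by
  induction n with
  | zero => simp
  | succ n ih =>
    have hσ : ((collide q U)^[n] ρ).trace = 1 := (trace_iterate_collide hq hU ρ n).trans hρ
    rw [Function.iterate_succ_apply', ← sub_eq_iff_eq_add',
      collide_apply_zero_zero_sub_gibbsWeight hq hU hex h00 hσ, ih]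
    ring

theorem iterate_collide_apply_zero_one (hex : IsExcitationPreserving U)
    (h00 : U (0, 0) (0, 0) = 1) (ρ : Matrix (Fin 2) (Fin 2) ℂ) (n : ℕ) :
    ((collide q U)^[n] ρ) 0 1 = (gibbsWeight q 1 * U (0, 1) (0, 1) * conj (U (1, 1) (1, 1))
      + gibbsWeight q 0 * conj (U (1, 0) (1, 0))) ^ n * ρ 0 1 := by
  induction n with
  | zero => simp
  | succ n ih =>
    rw [Function.iterate_succ_apply', collide_apply_zero_one hex h00, ih, pow_succ']
    ring

end Collision

theorem qubit_collision_iterates_general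
    (β E : ℝ) (hE : 0 < E) (q : ℝ) (hq : q = Real.exp (-β * E))
    (τ₀ τ₁ : ℝ) (hτ₀ : τ₀ = 1 / (1 + q)) (hτ₁ : τ₁ = q / (1 + q))
    (U : Matrix (Fin 2 × Fin 2) (Fin 2 × Fin 2) ℂ)
    (hU : U ∈ Matrix.unitaryGroup (Fin 2 × Fin 2) ℂ)
    (hcomm : U * Matrix.diagonal
        (fun ab : Fin 2 × Fin 2 => ((((ab.1 : ℕ) + (ab.2 : ℕ)) * E : ℝ) : ℂ))
      = Matrix.diagonal
        (fun ab : Fin 2 × Fin 2 => ((((ab.1 : ℕ) + (ab.2 : ℕ)) * E : ℝ) : ℂ)) * U)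
    (h00 : U ((0, 0) : Fin 2 × Fin 2) ((0, 0) : Fin 2 × Fin 2) = 1)
    (u w v : ℂ)
    (hu : u = U ((0, 1) : Fin 2 × Fin 2) ((0, 1) : Fin 2 × Fin 2))
    (hw : w = U ((1, 0) : Fin 2 × Fin 2) ((1, 0) : Fin 2 × Fin 2))
    (hv : v = U ((1, 1) : Fin 2 × Fin 2) ((1, 1) : Fin 2 × Fin 2))
    (ρ : Matrix (Fin 2) (Fin 2) ℂ) (htr : ρ.trace = 1)
    (N : ℕ) :
    ((collide q U)^[N] ρ) 0 0
        = (τ₀ : ℂ) + (‖u‖ : ℝ) ^ (2 * N) * (ρ 0 0 - (τ₀ : ℂ)) ∧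
    ((collide q U)^[N] ρ) 0 1
        = ((τ₁ : ℂ) * u * (starRingEnd ℂ) v + (τ₀ : ℂ) * (starRingEnd ℂ) w) ^ N * ρ 0 1 := by
  have hq1 : 1 + q ≠ 0 := by rw [hq]; positivity
  have hex : IsExcitationPreserving U := isExcitationPreserving_of_commute hE.ne' hcomm
  have hτ₀' : (gibbsWeight q 0 : ℂ) = τ₀ := by simp [gibbsWeight, hτ₀]
  have hτ₁' : (gibbsWeight q 1 : ℂ) = τ₁ := by simp [gibbsWeight, hτ₁]
  constructor
  · rw [iterate_collide_apply_zero_zero hq1 hU hex h00 htr, pow_mul, hu, hτ₀']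
  · rw [iterate_collide_apply_zero_one hex h00, hu, hv, hw, hτ₀', hτ₁']

/-- Equations (rho00)–(rho01) of the paper (used in the proof of Theorem 1): the N-fold
collision output of a qubit under an energy-preserving unitary with U_{(00),(00)} = 1. -/
theorem qubit_collision_iterates
    (β E : ℝ) (hβ : 0 < β) (hE : 0 < E) (q : ℝ) (hq : q = Real.exp (-β * E))
    (τ₀ τ₁ : ℝ) (hτ₀ : τ₀ = 1 / (1 + q)) (hτ₁ : τ₁ = q / (1 + q))
    (U : Matrix (Fin 2 × Fin 2) (Fin 2 × Fin 2) ℂ)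
    (hU : U ∈ Matrix.unitaryGroup (Fin 2 × Fin 2) ℂ)
    (hcomm : U * Matrix.diagonal
        (fun ab : Fin 2 × Fin 2 => ((((ab.1 : ℕ) + (ab.2 : ℕ)) * E : ℝ) : ℂ))
      = Matrix.diagonal
        (fun ab : Fin 2 × Fin 2 => ((((ab.1 : ℕ) + (ab.2 : ℕ)) * E : ℝ) : ℂ)) * U)
    (h00 : U ((0, 0) : Fin 2 × Fin 2) ((0, 0) : Fin 2 × Fin 2) = 1)
    (u w v : ℂ)
    (hu : u = U ((0, 1) : Fin 2 × Fin 2) ((0, 1) : Fin 2 × Fin 2))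
    (hw : w = U ((1, 0) : Fin 2 × Fin 2) ((1, 0) : Fin 2 × Fin 2))
    (hv : v = U ((1, 1) : Fin 2 × Fin 2) ((1, 1) : Fin 2 × Fin 2))
    (ρ : Matrix (Fin 2) (Fin 2) ℂ) (hρ : ρ.PosSemidef) (htr : ρ.trace = 1)
    (N : ℕ) (hN : 1 ≤ N) :
    ((collide q U)^[N] ρ) 0 0
        = (τ₀ : ℂ) + (‖u‖ : ℝ) ^ (2 * N) * (ρ 0 0 - (τ₀ : ℂ)) ∧
    ((collide q U)^[N] ρ) 0 1
        = ((τ₁ : ℂ) * u * (starRingEnd ℂ) v + (τ₀ : ℂ) * (starRingEnd ℂ) w) ^ N * ρ 0 1 :=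
  qubit_collision_iterates_general β E hE q hq τ₀ τ₁ hτ₀ hτ₁ U hU hcomm h00 u w v hu hw hv ρ htr N
end

section
/- Let β > 0, E > 0, q = exp(−β·E), s = 1+q+q², and τ_j = q^j/s for j = 0,1,2. Let p be a probability distribution on Fin 3 with τ_1·p_1 ≥ τ_0·p_2 ≥ τ_2·p_0 (β-ordering (1,2,0)). Then for every unitary complex matrix U indexed by (Fin 3) × (Fin 3) commuting with the diagonal matrix H_{(k,j)} = (k+j)·E, the output populations p'_k = Σ_{j<3} (U·D·U†)_{(k,j),(k,j)} (with D diagonal, D_{(k,j),(k,j)} = p_k·τ_j) satisfy: p_0 ≤ p'_0 ≤ τ_0 + (τ_1·p_1 − τ_0·p_2), τ_1 − (τ_1·p_1 − τ_2·p_0) ≤ p'_1 ≤ p_1, and p_2 − (τ_0·p_2 − τ_2·p_0) ≤ p'_2 ≤ τ_2 + (τ_1·p_1 − τ_2·p_0). (Necessity direction of the paper's computation of the single-collision cone for qutrit states in Subset V, Eq. (qutrit_cone).) -/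
/-!
A collision commuting with the total Hamiltonian only couples levels `(k, j)` of equal total
energy `k + j`, and the squared moduli `‖U r c‖ ^ 2` of a unitary are row-stochastic. Hence each
output population `(U D Uᴴ) r r` is a convex combination of the inputs `p k * τ j` on the energy
shell of `r`, and lies between their minimum and maximum there. On the shell `k + j = n` we have
`p k * τ j = (p k / τ k) * q ^ n / s ^ 2`, so the shell is ordered like the ratios `p k / τ k`,
which the β-ordering arranges as `p 0 / τ 0 ≤ p 2 / τ 2 ≤ p 1 / τ 1`. Summing the shell bounds
over `j` gives the six inequalities.
-/

open scoped BigOperators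
open Matrix

theorem Finset.sum_mul_mem_Icc_of_sum_eq_one {ι : Type*} {s : Finset ι} {w d : ι → ℝ}
    {a b : ℝ} (hw : ∀ i ∈ s, 0 ≤ w i) (hw1 : ∑ i ∈ s, w i = 1)
    (hd : ∀ i ∈ s, w i ≠ 0 → d i ∈ Set.Icc a b) : ∑ i ∈ s, w i * d i ∈ Set.Icc a b := by
  have key : ∀ i ∈ s, w i * a ≤ w i * d i ∧ w i * d i ≤ w i * b := by
    intro i hi
    rcases eq_or_ne (w i) 0 with h0 | h0
    · simp [h0]
    · exact ⟨mul_le_mul_of_nonneg_left (hd i hi h0).1 (hw i hi),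
        mul_le_mul_of_nonneg_left (hd i hi h0).2 (hw i hi)⟩
  constructor
  · calc a = ∑ i ∈ s, w i * a := by rw [← Finset.sum_mul, hw1, one_mul]
      _ ≤ _ := Finset.sum_le_sum fun i hi => (key i hi).1
  · calc _ ≤ ∑ i ∈ s, w i * b := Finset.sum_le_sum fun i hi => (key i hi).2
      _ = b := by rw [← Finset.sum_mul, hw1, one_mul]

namespace Matrix

variable {ι : Type*} [Fintype ι] [DecidableEq ι]

theorem apply_eq_zero_of_mul_diagonal_eq_s13 {R : Type*} [CommRing R] [NoZeroDivisors R]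
    {U : Matrix ι ι R} {h : ι → R} (hU : U * diagonal h = diagonal h * U) {r c : ι}
    (hrc : h r ≠ h c) : U r c = 0 := by
  have hrc' : U r c * h c = h r * U r c := by
    simpa only [mul_diagonal, diagonal_mul] using congrFun (congrFun hU r) c
  have : (h c - h r) * U r c = 0 := by linear_combination hrc'
  exact (mul_eq_zero.mp this).resolve_left (sub_ne_zero.mpr hrc.symm)

variable {𝕜 : Type*} [RCLike 𝕜] {U : Matrix ι ι 𝕜}

theorem sum_norm_sq_row_of_mem_unitaryGroup (hU : U ∈ unitaryGroup ι 𝕜) (r : ι) :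
    ∑ c, ‖U r c‖ ^ 2 = 1 := by
  have hrr := congrFun (congrFun (mem_unitaryGroup_iff.mp hU) r) r
  rw [mul_apply, one_apply_eq] at hrr
  refine RCLike.ofReal_injective (K := 𝕜) ?_
  simpa [star_apply, RCLike.mul_conj] using hrr

theorem re_mul_diagonal_mul_conjTranspose_apply_self_s13 (d : ι → ℝ) (r : ι) :
    RCLike.re ((U * diagonal (fun i => (d i : 𝕜)) * Uᴴ) r r) = ∑ c, ‖U r c‖ ^ 2 * d c := by
  rw [mul_apply, map_sum]
  simp only [mul_diagonal, conjTranspose_apply]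
  refine Finset.sum_congr rfl fun c _ => ?_
  rw [mul_right_comm, RCLike.star_def, RCLike.mul_conj]
  norm_cast

theorem re_mul_diagonal_mul_conjTranspose_apply_self_mem_Icc (hU : U ∈ unitaryGroup ι 𝕜)
    {h : ι → 𝕜} (hcomm : U * diagonal h = diagonal h * U) {d : ι → ℝ} {a b : ℝ} {r : ι}
    (hd : ∀ c, h c = h r → d c ∈ Set.Icc a b) :
    RCLike.re ((U * diagonal (fun i => (d i : 𝕜)) * Uᴴ) r r) ∈ Set.Icc a b := by
  rw [re_mul_diagonal_mul_conjTranspose_apply_self_s13]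
  refine Finset.sum_mul_mem_Icc_of_sum_eq_one (fun _ _ => by positivity)
    (sum_norm_sq_row_of_mem_unitaryGroup hU r) fun c _ hc => hd c ?_
  by_contra hrc
  exact hc (by rw [apply_eq_zero_of_mul_diagonal_eq_s13 hcomm (Ne.symm hrc), norm_zero,
    zero_pow two_ne_zero])

end Matrix

namespace QutritCollision

/-- `shellLower p τ n` and `shellUpper p τ n` are the smallest and largest of the inputs
`p k * τ j` on the shell `k + j = n`, given the β-ordering. -/
def shellLower (p τ : Fin 3 → ℝ) : ℕ → ℝ
  | 0 => p 0 * τ 0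
  | 1 => p 0 * τ 1
  | 2 => p 0 * τ 2
  | 3 => p 2 * τ 1
  | _ => p 2 * τ 2

def shellUpper (p τ : Fin 3 → ℝ) : ℕ → ℝ
  | 0 => p 0 * τ 0
  | 1 => p 1 * τ 0
  | 2 => p 1 * τ 1
  | 3 => p 1 * τ 2
  | _ => p 2 * τ 2

theorem mem_Icc_shellLower_shellUpper {p τ : Fin 3 → ℝ} {q : ℝ} (hq : 0 < q)
    (hqτ₁ : τ 1 = q * τ 0) (hqτ₂ : τ 2 = q * τ 1)
    (hord₁ : τ 0 * p 2 ≤ τ 1 * p 1) (hord₂ : τ 2 * p 0 ≤ τ 0 * p 2) (c : Fin 3 × Fin 3) :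
    p c.1 * τ c.2 ∈ Set.Icc (shellLower p τ (c.1 + c.2)) (shellUpper p τ (c.1 + c.2)) := by
  have h₁ : p 0 * τ 1 ≤ p 1 * τ 0 := by
    refine le_of_mul_le_mul_left ?_ hq
    linear_combination hord₂ + hord₁ - p 0 * hqτ₂ + p 1 * hqτ₁
  have h₃ : p 2 * τ 1 ≤ p 1 * τ 2 := by
    linear_combination q * hord₁ + p 2 * hqτ₁ - p 1 * hqτ₂
  obtain ⟨k, j⟩ := c
  fin_cases k <;> fin_cases j <;> refine ⟨?_, ?_⟩ <;> simp [shellLower, shellUpper] <;> linarith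

end QutritCollision

theorem qutrit_cone_necessity_general
    (β E : ℝ) (hE : 0 < E) (q : ℝ) (hq : q = Real.exp (-β * E))
    (s : ℝ) (hs : s = 1 + q + q ^ 2)
    (τ : Fin 3 → ℝ) (hτ : ∀ j, τ j = q ^ (j : ℕ) / s)
    (p : Fin 3 → ℝ) (hp1 : ∑ k, p k = 1)
    (hord₁ : τ 0 * p 2 ≤ τ 1 * p 1) (hord₂ : τ 2 * p 0 ≤ τ 0 * p 2)
    (U : Matrix (Fin 3 × Fin 3) (Fin 3 × Fin 3) ℂ)
    (hU : U ∈ Matrix.unitaryGroup (Fin 3 × Fin 3) ℂ)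
    (hcomm : U * Matrix.diagonal
        (fun kj : Fin 3 × Fin 3 => ((((kj.1 : ℕ) + (kj.2 : ℕ)) * E : ℝ) : ℂ))
      = Matrix.diagonal
        (fun kj : Fin 3 × Fin 3 => ((((kj.1 : ℕ) + (kj.2 : ℕ)) * E : ℝ) : ℂ)) * U)
    (p' : Fin 3 → ℝ)
    (hp' : ∀ k : Fin 3, p' k = ∑ j : Fin 3,
      ((U * Matrix.diagonal
          (fun kj : Fin 3 × Fin 3 => ((p kj.1 * τ kj.2 : ℝ) : ℂ)) * Uᴴ)
        (k, j) (k, j)).re) :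
    (p 0 ≤ p' 0 ∧ p' 0 ≤ τ 0 + (τ 1 * p 1 - τ 0 * p 2)) ∧
    (τ 1 - (τ 1 * p 1 - τ 2 * p 0) ≤ p' 1 ∧ p' 1 ≤ p 1) ∧
    (p 2 - (τ 0 * p 2 - τ 2 * p 0) ≤ p' 2 ∧ p' 2 ≤ τ 2 + (τ 1 * p 1 - τ 2 * p 0)) := by
  open QutritCollision in
  have hq0 : 0 < q := hq ▸ Real.exp_pos _
  have hs0 : s ≠ 0 := by rw [hs]; positivity
  obtain ⟨hτ0, hτ1, hτ2⟩ : τ 0 = 1 / s ∧ τ 1 = q / s ∧ τ 2 = q ^ 2 / s := by simp [hτ]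
  have hqτ₁ : τ 1 = q * τ 0 := by rw [hτ1, hτ0]; ring
  have hqτ₂ : τ 2 = q * τ 1 := by rw [hτ2, hτ1]; ring
  have hτsum : τ 0 + τ 1 + τ 2 = 1 := by rw [hτ0, hτ1, hτ2]; field_simp; linarith
  have hshell : ∀ c r : Fin 3 × Fin 3,
      ((((c.1 : ℕ) + (c.2 : ℕ)) * E : ℝ) : ℂ) = ((((r.1 : ℕ) + (r.2 : ℕ)) * E : ℝ) : ℂ) →
      (c.1 : ℕ) + c.2 = r.1 + r.2 := by
    intro c r h
    exact_mod_cast mul_right_cancel₀ hE.ne' (Complex.ofReal_injective h)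
  have hrow : ∀ k j : Fin 3,
      ((U * Matrix.diagonal (fun kj : Fin 3 × Fin 3 => ((p kj.1 * τ kj.2 : ℝ) : ℂ)) * Uᴴ)
        (k, j) (k, j)).re ∈ Set.Icc (shellLower p τ (k + j)) (shellUpper p τ (k + j)) :=
    fun k j => Matrix.re_mul_diagonal_mul_conjTranspose_apply_self_mem_Icc hU hcomm
      fun c hc => hshell c (k, j) hc ▸
        mem_Icc_shellLower_shellUpper hq0 hqτ₁ hqτ₂ hord₁ hord₂ c
  have hpop : ∀ k : Fin 3, p' k ∈ Set.Icc (∑ j : Fin 3, shellLower p τ (k + j))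
      (∑ j : Fin 3, shellUpper p τ (k + j)) := fun k => by
    rw [hp' k]
    exact ⟨Finset.sum_le_sum fun j _ => (hrow k j).1, Finset.sum_le_sum fun j _ => (hrow k j).2⟩
  have h0 := hpop 0
  have h1 := hpop 1
  have h2 := hpop 2
  simp only [Fin.sum_univ_three, Fin.val_zero, Fin.val_one, Fin.val_two, shellLower, shellUpper,
    Set.mem_Icc] at h0 h1 h2 hp1
  exact ⟨⟨by linear_combination h0.1 - p 0 * hτsum, by linear_combination h0.2 + τ 0 * hp1⟩,
    ⟨by linear_combination h1.1 - τ 1 * hp1, by linear_combination h1.2 + p 1 * hτsum⟩,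
    by linear_combination h2.1 - p 2 * hτsum, by linear_combination h2.2 + τ 2 * hp1⟩

/-- Necessity direction of the paper's single-collision qutrit cone, Eq. (qutrit_cone):
for an input distribution in Subset V (β-ordering (1,2,0)), the output populations of any
energy-preserving collision with a Gibbs qutrit molecule obey the stated bounds. -/
theorem qutrit_cone_necessity
    (β E : ℝ) (hβ : 0 < β) (hE : 0 < E) (q : ℝ) (hq : q = Real.exp (-β * E))
    (s : ℝ) (hs : s = 1 + q + q ^ 2)
    (τ : Fin 3 → ℝ) (hτ : ∀ j, τ j = q ^ (j : ℕ) / s)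
    (p : Fin 3 → ℝ) (hp0 : ∀ k, 0 ≤ p k) (hp1 : ∑ k, p k = 1)
    (hord₁ : τ 0 * p 2 ≤ τ 1 * p 1) (hord₂ : τ 2 * p 0 ≤ τ 0 * p 2)
    (U : Matrix (Fin 3 × Fin 3) (Fin 3 × Fin 3) ℂ)
    (hU : U ∈ Matrix.unitaryGroup (Fin 3 × Fin 3) ℂ)
    (hcomm : U * Matrix.diagonal
        (fun kj : Fin 3 × Fin 3 => ((((kj.1 : ℕ) + (kj.2 : ℕ)) * E : ℝ) : ℂ))
      = Matrix.diagonal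
        (fun kj : Fin 3 × Fin 3 => ((((kj.1 : ℕ) + (kj.2 : ℕ)) * E : ℝ) : ℂ)) * U)
    (p' : Fin 3 → ℝ)
    (hp' : ∀ k : Fin 3, p' k = ∑ j : Fin 3,
      ((U * Matrix.diagonal
          (fun kj : Fin 3 × Fin 3 => ((p kj.1 * τ kj.2 : ℝ) : ℂ)) * Uᴴ)
        (k, j) (k, j)).re) :
    (p 0 ≤ p' 0 ∧ p' 0 ≤ τ 0 + (τ 1 * p 1 - τ 0 * p 2)) ∧
    (τ 1 - (τ 1 * p 1 - τ 2 * p 0) ≤ p' 1 ∧ p' 1 ≤ p 1) ∧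
    (p 2 - (τ 0 * p 2 - τ 2 * p 0) ≤ p' 2 ∧ p' 2 ≤ τ 2 + (τ 1 * p 1 - τ 2 * p 0)) :=
  qutrit_cone_necessity_general β E hE q hq s hs τ hτ p hp1 hord₁ hord₂ U hU hcomm p' hp'
end

section
/- Let q ∈ (0, 1), s = 1+q+q², τ_0 = 1/s, τ_1 = q/s, τ_2 = q²/s, and let d ≥ 2. Let G be the d×d real matrix with G_{0,0} = τ_0+τ_1, G_{0,1} = τ_0, G_{j,j−1} = τ_2, G_{j,j} = τ_1 and G_{j,j+1} = τ_0 for 1 ≤ j ≤ d−2, G_{d−1,d−2} = τ_2, G_{d−1,d−1} = τ_1+τ_2, and all other entries 0. Then the vector p* with p*_k = q^{2k} / Σ_{l<d} q^{2l} is a probability vector satisfying G·p* = p*, and it is the unique probability vector fixed by G. (Eqs. (eff_G_S) and (fix_point): the machineless iterative protocol drives the d-level system to the Gibbs state at inverse temperature 2β.) -/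
open Matrix

/-! `G` is the lazy walk on `{0, …, d-1}` with reflecting ends that steps up with probability
`τ₂` and down with probability `τ₀`. Since `τ₂ = q² τ₀`, it satisfies detailed balance with
respect to `p*`, so `G (p* ⊙ x) = p* ⊙ (xᵀ G)`: fixed vectors of `G` correspond to harmonic
functions of the walk. The constant function is harmonic because `G` is column-stochastic, which
gives `G p* = p*`; conversely a harmonic function is constant, propagating from `0` upwards,
since the walk steps up with positive probability. -/

namespace Matrix

variable {n R : Type*} [Fintype n]

def IsReversible [Mul R] (W : Matrix n n R) (π : n → R) : Prop :=
  ∀ i j, W i j * π j = W j i * π i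

namespace IsReversible

variable {W : Matrix n n R} {π : n → R}

theorem mulVec_mul [CommSemiring R] (h : W.IsReversible π) (x : n → R) :
    W *ᵥ (π * x) = π * (x ᵥ* W) := by
  ext i
  simp only [mulVec, vecMul, dotProduct, Pi.mul_apply, Finset.mul_sum]
  refine Finset.sum_congr rfl fun j _ => ?_
  rw [← mul_assoc, h i j]
  ring

theorem mulVec_eq_self [CommSemiring R] (h : W.IsReversible π) (hW : 1 ᵥ* W = 1) :
    W *ᵥ π = π := by
  simpa [hW] using h.mulVec_mul 1

theorem eq_of_mulVec_eq_self [Field R] (h : W.IsReversible π) (hπ : ∀ i, π i ≠ 0)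
    (hπ_sum : ∑ i, π i = 1) (hW : ∀ x : n → R, x ᵥ* W = x → ∀ i j, x i = x j)
    {v : n → R} (hv_sum : ∑ i, v i = 1) (hv : W *ᵥ v = v) : v = π := by
  set x := v / π
  have hπx : π * x = v := funext fun i => mul_div_cancel₀ (v i) (hπ i)
  rw [← hπx, h.mulVec_mul] at hv
  have hx : x ᵥ* W = x := funext fun i => mul_left_cancel₀ (hπ i) (congrFun hv i)
  funext i
  have hxi : x i = 1 := by
    rw [← hv_sum, ← hπx]
    simp only [Pi.mul_apply, hW x hx _ i, ← Finset.sum_mul, hπ_sum, one_mul]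
  rw [← hπx, Pi.mul_apply, hxi, mul_one]

end IsReversible

end Matrix

namespace Fin

variable {m : ℕ}

def succSat (j : Fin (m + 1)) : Fin (m + 1) :=
  ⟨min (j + 1) m, Nat.lt_succ_of_le (min_le_right _ _)⟩

def predSat (j : Fin (m + 1)) : Fin (m + 1) := ⟨j - 1, (Nat.sub_le _ _).trans_lt j.isLt⟩

@[simp] theorem succSat_castSucc (i : Fin m) : i.castSucc.succSat = i.succ :=
  Fin.ext (by simp [succSat])

@[simp] theorem predSat_succ (i : Fin m) : i.succ.predSat = i.castSucc :=
  Fin.ext (by simp [predSat])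

@[simp] theorem predSat_zero : (0 : Fin (m + 1)).predSat = 0 := rfl

end Fin

section

variable {R : Type*}

/-- Column `j` is the law of one step from `j`; a step off either end stays put. -/
def reflectingWalk [Zero R] [Add R] (m : ℕ) (up stay down : R) :
    Matrix (Fin (m + 1)) (Fin (m + 1)) R :=
  Matrix.of fun i j =>
    (if i = j.succSat then up else 0) + (if i = j then stay else 0) +
      (if i = j.predSat then down else 0)

variable {m : ℕ} {up stay down : R}

theorem vecMul_reflectingWalk [NonAssocSemiring R] (x : Fin (m + 1) → R) (j : Fin (m + 1)) :
    (x ᵥ* reflectingWalk m up stay down) j =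
      x j.succSat * up + x j * stay + x j.predSat * down := by
  simp [vecMul, dotProduct, reflectingWalk, mul_add, Finset.sum_add_distrib]

theorem one_vecMul_reflectingWalk [NonAssocSemiring R] (h : up + stay + down = 1) :
    1 ᵥ* reflectingWalk m up stay down = 1 := by
  ext j
  simp [vecMul_reflectingWalk, h]

theorem reflectingWalk_isReversible [CommSemiring R] {π : Fin (m + 1) → R}
    (hπ : ∀ i : Fin m, up * π i.castSucc = down * π i.succ) :
    (reflectingWalk m up stay down).IsReversible π := by
  rintro ⟨a, ha⟩ ⟨b, hb⟩
  wlog hab : a ≤ b generalizing a b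
  · exact (this b hb a ha (by omega)).symm
  obtain rfl | hlt := hab.eq_or_lt
  · rfl
  simp only [reflectingWalk, of_apply, Fin.succSat, Fin.predSat, Fin.mk.injEq]
  obtain rfl | hfar := (Nat.succ_le_of_lt hlt).eq_or_lt
  · split_ifs <;> try omega
    simp only [zero_add, add_zero]
    exact (hπ ⟨a, by omega⟩).symm
  · split_ifs <;> first | omega | simp only [add_zero, zero_mul]

theorem eq_of_vecMul_reflectingWalk_eq_self [Field R] (h : up + stay + down = 1) (hup : up ≠ 0)
    {x : Fin (m + 1) → R} (hx : x ᵥ* reflectingWalk m up stay down = x) (i j : Fin (m + 1)) :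
    x i = x j := by
  suffices ∀ i, x i.predSat = x i ∧ x i = x 0 by rw [(this i).2, (this j).2]
  refine Fin.induction (by simp) (fun i ⟨hpred, hzero⟩ => ?_)
  have hrow := congrFun hx i.castSucc
  rw [vecMul_reflectingWalk, Fin.succSat_castSucc, hpred] at hrow
  have hstep : x i.succ = x i.castSucc := by
    refine mul_right_cancel₀ hup ?_
    linear_combination hrow - x i.castSucc * h
  rw [Fin.predSat_succ, hstep]
  exact ⟨rfl, hzero⟩

end

/-- Eqs. (eff_G_S) and (fix_point): the tridiagonal column-stochastic transition matrix of
the machineless iterative protocol has the Gibbs distribution at inverse temperature 2β as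
its unique fixed probability vector. -/
theorem fixed_point_machineless_protocol
    (q : ℝ) (hq : q ∈ Set.Ioo (0 : ℝ) 1)
    (s : ℝ) (hs : s = 1 + q + q ^ 2)
    (τ₀ τ₁ τ₂ : ℝ) (hτ₀ : τ₀ = 1 / s) (hτ₁ : τ₁ = q / s) (hτ₂ : τ₂ = q ^ 2 / s)
    (d : ℕ) (hd : 2 ≤ d)
    (G : Matrix (Fin d) (Fin d) ℝ)
    (hG : ∀ i j : Fin d, G i j =
      (if (j : ℕ) + 1 = (i : ℕ) then τ₂ else 0) +
      (if i = j then τ₁ else 0) +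
      (if (i : ℕ) + 1 = (j : ℕ) then τ₀ else 0) +
      (if (i : ℕ) = 0 ∧ (j : ℕ) = 0 then τ₀ else 0) +
      (if (i : ℕ) = d - 1 ∧ (j : ℕ) = d - 1 then τ₂ else 0))
    (pstar : Fin d → ℝ)
    (hpstar : ∀ k : Fin d, pstar k = q ^ (2 * (k : ℕ)) / ∑ l : Fin d, q ^ (2 * (l : ℕ))) :
    ((∀ k, 0 ≤ pstar k) ∧ ∑ k, pstar k = 1) ∧
    G.mulVec pstar = pstar ∧
    (∀ v : Fin d → ℝ, (∀ k, 0 ≤ v k) → (∑ k, v k = 1) →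
      G.mulVec v = v → v = pstar) := by
  obtain ⟨m, rfl⟩ : ∃ m, d = m + 1 := ⟨d - 1, by omega⟩
  obtain rfl : G = reflectingWalk m τ₂ τ₁ τ₀ := by
    ext i j
    rw [hG]
    simp only [reflectingWalk, of_apply, Fin.succSat, Fin.predSat, Fin.ext_iff, Nat.add_sub_cancel]
    split_ifs <;> first | omega | ring
  have hq0 : 0 < q := hq.1
  have hs0 : 0 < s := by rw [hs]; positivity
  have hτ : τ₂ + τ₁ + τ₀ = 1 := by rw [hτ₀, hτ₁, hτ₂, hs]; field_simp; ring
  have hτ₂0 : τ₂ ≠ 0 := by rw [hτ₂]; positivity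
  have hZ : 0 < ∑ l : Fin (m + 1), q ^ (2 * (l : ℕ)) :=
    Finset.sum_pos (fun _ _ => by positivity) Finset.univ_nonempty
  have hpos : ∀ k, 0 < pstar k := fun k => by rw [hpstar]; positivity
  have hsum : ∑ k, pstar k = 1 := by
    simp only [hpstar, ← Finset.sum_div, div_self hZ.ne']
  have hrev : (reflectingWalk m τ₂ τ₁ τ₀).IsReversible pstar := by
    refine reflectingWalk_isReversible fun i => ?_
    rw [hpstar, hpstar, hτ₀, hτ₂, Fin.val_succ, Fin.val_castSucc]
    field_simp
    ring
  refine ⟨⟨fun k => (hpos k).le, hsum⟩, hrev.mulVec_eq_self (one_vecMul_reflectingWalk hτ),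
    fun v _ hv_sum hv => hrev.eq_of_mulVec_eq_self (fun k => (hpos k).ne') hsum
      (fun _ hx => eq_of_vecMul_reflectingWalk_eq_self hτ hτ₂0 hx) hv_sum hv⟩
end

section
/- Let q ∈ (0, 1), s = 1+q+q², τ_j = q^j/s, and let G be the 3×3 matrix [[τ_0+τ_1, τ_0, 0], [τ_2, τ_1, τ_0], [0, τ_2, τ_1+τ_2]], with fixed probability vector p* = (1, q², q⁴)/(1+q²+q⁴). Then for every vector v ∈ ℝ³ with v_0+v_1+v_2 = 0 one has G·(G·v) = (2q/s)·(G·v); consequently, for every probability vector p and every N ≥ 1, G^N·p − p* = (2q/s)^{N−1}·(G·p − p*), so the iterates converge to p* exponentially at rate 2τ_1 = 2q/(1+q+q²). (Convergence statement of Sec. IV.B for the machineless qutrit cooling protocol.) -/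
/-!
The matrix `G = !![a + b, a, 0; c, b, a; 0, c, b + c]` has equal column sums, so it preserves the
zero-sum plane; there it has trace `2b` and determinant `b² - ac`, and Cayley–Hamilton gives
`G² v = 2b • G v + (ac - b²) • v` for zero-sum `v`. The Gibbs weights are geometric,
`τ₀ τ₂ = τ₁²`, so `G` acts on the image of that plane as multiplication by `2τ₁`. Since `p - p*`
is zero-sum and `G p* = p*`, every further round multiplies `G p - p*` by `2τ₁`.
-/

namespace Matrix

variable {n R : Type*} [Fintype n] [DecidableEq n] [CommRing R]

theorem pow_mulVec_eq_self_of_mulVec_eq_self {G : Matrix n n R} {x : n → R}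
    (hx : G *ᵥ x = x) (k : ℕ) : (G ^ k) *ᵥ x = x := by
  induction k with
  | zero => rw [pow_zero, one_mulVec]
  | succ k ih => rw [pow_succ, ← mulVec_mulVec, hx, ih]

theorem pow_succ_mulVec_of_mulVec_mulVec_eq_smul {G : Matrix n n R} {w : n → R} {c : R}
    (hw : G *ᵥ (G *ᵥ w) = c • G *ᵥ w) (k : ℕ) : (G ^ (k + 1)) *ᵥ w = c ^ k • G *ᵥ w := by
  induction k with
  | zero => rw [zero_add, pow_one, pow_zero, one_smul]
  | succ k ih =>
    rw [pow_succ', ← mulVec_mulVec, ih, mulVec_smul, hw, smul_smul, pow_succ]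

theorem pow_succ_mulVec_sub_eq_smul {G : Matrix n n R} {p pstar : n → R} {c : R}
    (hfix : G *ᵥ pstar = pstar) (hc : G *ᵥ (G *ᵥ (p - pstar)) = c • G *ᵥ (p - pstar))
    (k : ℕ) : (G ^ (k + 1)) *ᵥ p - pstar = c ^ k • (G *ᵥ p - pstar) := by
  calc (G ^ (k + 1)) *ᵥ p - pstar = (G ^ (k + 1)) *ᵥ (p - pstar) := by
        rw [mulVec_sub, pow_mulVec_eq_self_of_mulVec_eq_self hfix]
    _ = c ^ k • G *ᵥ (p - pstar) := pow_succ_mulVec_of_mulVec_mulVec_eq_smul hc k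
    _ = c ^ k • (G *ᵥ p - pstar) := by rw [mulVec_sub, hfix]

end Matrix

open Matrix

def qutritStep {R : Type*} [CommRing R] (a b c : R) : Matrix (Fin 3) (Fin 3) R :=
  !![a + b, a, 0; c, b, a; 0, c, b + c]

section qutritStep

variable {R : Type*} [CommRing R]

theorem qutritStep_mulVec_mulVec (a b c : R) (v : Fin 3 → R) :
    qutritStep a b c *ᵥ (qutritStep a b c *ᵥ v) =
      (2 * b) • qutritStep a b c *ᵥ v + (a * c - b ^ 2) • v +
        (∑ i, v i) • ![a ^ 2, a * c, c ^ 2] := by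
  ext i
  fin_cases i <;>
    simp only [qutritStep, mulVec, dotProduct, Fin.sum_univ_three, of_apply, cons_val',
      cons_val_zero, cons_val_one, cons_val_two, cons_val_fin_one, Pi.add_apply, Pi.smul_apply,
      smul_eq_mul, vecHead, vecTail, Fin.zero_eta, Fin.mk_one, Fin.reduceFinMk, Function.comp_apply,
      Fin.succ_zero_eq_one] <;> ring

theorem qutritStep_mulVec_mulVec_of_sum_eq_zero {a b c : R} (habc : a * c = b ^ 2)
    {v : Fin 3 → R} (hv : ∑ i, v i = 0) :
    qutritStep a b c *ᵥ (qutritStep a b c *ᵥ v) = (2 * b) • qutritStep a b c *ᵥ v := by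
  rw [qutritStep_mulVec_mulVec, habc, sub_self, hv, zero_smul, zero_smul, add_zero, add_zero]

end qutritStep

theorem sum_gibbs_sq_eq_one (q : ℝ) :
    ∑ k : Fin 3, q ^ (2 * (k : ℕ)) / (1 + q ^ 2 + q ^ 4) = 1 := by
  have hpos : 0 < 1 + q ^ 2 + q ^ 4 := by positivity
  rw [← Finset.sum_div, div_eq_one_iff_eq hpos.ne', Fin.sum_univ_three]
  norm_num

theorem qutrit_protocol_convergence_general
    (q : ℝ)
    (s : ℝ)
    (τ₀ τ₁ τ₂ : ℝ) (hτ₀ : τ₀ = 1 / s) (hτ₁ : τ₁ = q / s) (hτ₂ : τ₂ = q ^ 2 / s)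
    (G : Matrix (Fin 3) (Fin 3) ℝ)
    (hG : G = !![τ₀ + τ₁, τ₀, 0; τ₂, τ₁, τ₀; 0, τ₂, τ₁ + τ₂])
    (pstar : Fin 3 → ℝ)
    (hpstar : pstar = fun k : Fin 3 => q ^ (2 * (k : ℕ)) / (1 + q ^ 2 + q ^ 4))
    (hfix : G.mulVec pstar = pstar) :
    (∀ v : Fin 3 → ℝ, v 0 + v 1 + v 2 = 0 →
      G.mulVec (G.mulVec v) = (2 * q / s) • G.mulVec v) ∧
    (∀ p : Fin 3 → ℝ, (∀ k, 0 ≤ p k) → (∑ k, p k = 1) →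
      ∀ N : ℕ, 1 ≤ N →
        (G ^ N).mulVec p - pstar = (2 * q / s) ^ (N - 1) • (G.mulVec p - pstar)) := by
  have hG' : G = qutritStep τ₀ τ₁ τ₂ := hG
  have hgeom : τ₀ * τ₂ = τ₁ ^ 2 := by rw [hτ₀, hτ₁, hτ₂]; ring
  have hrate : 2 * q / s = 2 * τ₁ := by rw [hτ₁]; ring
  have hsq : ∀ v : Fin 3 → ℝ, v 0 + v 1 + v 2 = 0 →
      G *ᵥ (G *ᵥ v) = (2 * q / s) • G *ᵥ v := fun v hv => by
    rw [hG', hrate]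
    exact qutritStep_mulVec_mulVec_of_sum_eq_zero hgeom (by rwa [Fin.sum_univ_three])
  refine ⟨hsq, fun p _ hp N hN => ?_⟩
  obtain ⟨k, rfl⟩ := Nat.exists_eq_add_of_le' hN
  have hzero : ∑ i, (p i - pstar i) = 0 := by
    rw [Finset.sum_sub_distrib, hp, hpstar, sum_gibbs_sq_eq_one, sub_self]
  rw [Nat.add_sub_cancel]
  exact pow_succ_mulVec_sub_eq_smul hfix (hsq _ (by rwa [Fin.sum_univ_three] at hzero)) k

/-- Convergence of the machineless qutrit cooling protocol (Sec. IV.B): on the zero-sum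
subspace G² acts as (2q/s)·G, hence the iterates converge to the fixed point p* exponentially
at rate 2τ₁ = 2q/(1+q+q²). -/
theorem qutrit_protocol_convergence
    (q : ℝ) (hq : q ∈ Set.Ioo (0 : ℝ) 1)
    (s : ℝ) (hs : s = 1 + q + q ^ 2)
    (τ₀ τ₁ τ₂ : ℝ) (hτ₀ : τ₀ = 1 / s) (hτ₁ : τ₁ = q / s) (hτ₂ : τ₂ = q ^ 2 / s)
    (G : Matrix (Fin 3) (Fin 3) ℝ)
    (hG : G = !![τ₀ + τ₁, τ₀, 0; τ₂, τ₁, τ₀; 0, τ₂, τ₁ + τ₂])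
    (pstar : Fin 3 → ℝ)
    (hpstar : pstar = fun k : Fin 3 => q ^ (2 * (k : ℕ)) / (1 + q ^ 2 + q ^ 4))
    (hfix : G.mulVec pstar = pstar) :
    (∀ v : Fin 3 → ℝ, v 0 + v 1 + v 2 = 0 →
      G.mulVec (G.mulVec v) = (2 * q / s) • G.mulVec v) ∧
    (∀ p : Fin 3 → ℝ, (∀ k, 0 ≤ p k) → (∑ k, p k = 1) →
      ∀ N : ℕ, 1 ≤ N →
        (G ^ N).mulVec p - pstar = (2 * q / s) ^ (N - 1) • (G.mulVec p - pstar)) :=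
  qutrit_protocol_convergence_general q s τ₀ τ₁ τ₂ hτ₀ hτ₁ hτ₂ G hG pstar hpstar hfix
end
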